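/- Let S = ⟨s/t_1, ..., s/t_k⟩ with t_1 > ... > t_k > 1 pairwise coprime and s = t_1⋯t_k. For every m ≥ 1, the length set of ms in S has cardinality at least mk - m + 1. -/

import Mathlib

open Finset

namespace LengthDensity

/-- The set of factorizations of `n` with respect to generators `g`. -/
def facs {k : ℕ} (g : Fin k → ℕ) (n : ℕ) : Set (Fin k → ℕ) :=
  {z | ∑ i, z i * g i = n}

/-- Membership in the numerical semigroup generated by `g`. -/
def mem {k : ℕ} (g : Fin k → ℕ) (n : ℕ) : Prop := (facs g n).Nonempty

/-- The set of factorization lengths of `n`. -/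
def lengthSet {k : ℕ} (g : Fin k → ℕ) (n : ℕ) : Set ℕ :=
  (fun z => ∑ i, z i) '' facs g n

/-- Length density of an element. -/
noncomputable def LD {k : ℕ} (g : Fin k → ℕ) (n : ℕ) : ℝ :=
  (((lengthSet g n).ncard : ℝ) - 1) /
    (((sSup (lengthSet g n) : ℕ) : ℝ) - ((sInf (lengthSet g n) : ℕ) : ℝ))

/-- Length density of the semigroup: infimum of `LD` over elements with
non-singleton length set. -/
noncomputable def LDsgp {k : ℕ} (g : Fin k → ℕ) : ℝ :=
  sInf {x : ℝ | ∃ n : ℕ, 2 ≤ (lengthSet g n).ncard ∧ x = LD g n}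

/-- The delta set (successive gaps) of a set of naturals. -/
def deltaOf (L : Set ℕ) : Set ℕ :=
  {d | ∃ a ∈ L, ∃ b ∈ L, a < b ∧ (∀ c ∈ L, ¬(a < c ∧ c < b)) ∧ d = b - a}

/-- The delta set of an element. -/
def delta {k : ℕ} (g : Fin k → ℕ) (n : ℕ) : Set ℕ := deltaOf (lengthSet g n)

/-- The delta set of the semigroup. -/
def Delta {k : ℕ} (g : Fin k → ℕ) : Set ℕ := ⋃ n : ℕ, delta g n

/-- Adjacency in the factorization graph of `n`: two factorizations of `n`
sharing a positive coordinate. -/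
def adj {k : ℕ} (g : Fin k → ℕ) (n : ℕ) (z z' : Fin k → ℕ) : Prop :=
  z ∈ facs g n ∧ z' ∈ facs g n ∧ ∃ i, 0 < z i ∧ 0 < z' i

/-- `n` is a Betti element: its factorization graph is disconnected. -/
def IsBetti {k : ℕ} (g : Fin k → ℕ) (n : ℕ) : Prop :=
  ∃ z ∈ facs g n, ∃ z' ∈ facs g n, ¬ Relation.ReflTransGen (adj g n) z z'

/-- The semigroup is tasty: `LD(S) > 1 / max Δ(S)`. -/
def Tasty {k : ℕ} (g : Fin k → ℕ) : Prop := LDsgp g > 1 / ((sSup (Delta g) : ℕ) : ℝ)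

/-- The semigroup is bland: `LD(S) = 1 / max Δ(S)`. -/
def Bland {k : ℕ} (g : Fin k → ℕ) : Prop := LDsgp g = 1 / ((sSup (Delta g) : ℕ) : ℝ)

/-- `g` is a minimal generating set: no generator is a nonnegative integer
combination of the others. -/
def IsMinGen {k : ℕ} (g : Fin k → ℕ) : Prop :=
  ∀ i, ¬ ∃ z : Fin k → ℕ, z i = 0 ∧ ∑ j, z j * g j = g i

/-- `n` is a non-atom of the semigroup generated by `g`:
it is a sum of two nonzero elements. -/
def NonAtom {k : ℕ} (g : Fin k → ℕ) (n : ℕ) : Prop :=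
  ∃ a b : ℕ, 0 < a ∧ 0 < b ∧ mem g a ∧ mem g b ∧ n = a + b

/-
Write `m s` as `m` copies of `s` and each copy as `t i` copies of the generator `s / t i`. Giving
copy `j` the index `⌊(n + j) / m⌋` yields a factorization of length
`φ n = ∑ j < m, t ⌊(n + j) / m⌋`, and shifting `n` by one telescopes to
`φ n - φ (n + 1) = t ⌊n / m⌋ - t (⌊n / m⌋ + 1) > 0`. Hence `φ 0 > φ 1 > ⋯ > φ (m k)` are
`m k + 1` distinct lengths.
-/

variable {ι : Type*} {K : ℕ} {g : Fin K → ℕ}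

theorem lengthSet_finite (hg : ∀ i, 0 < g i) (n : ℕ) : (lengthSet g n).Finite := by
  refine (Set.finite_Iic n).subset ?_
  rintro _ ⟨z, hz, rfl⟩
  calc ∑ i, z i ≤ ∑ i, z i * g i := sum_le_sum fun i _ => Nat.le_mul_of_pos_right _ (hg i)
    _ = n := hz

theorem sum_mem_lengthSet_card_mul {t : Fin K → ℕ} {s : ℕ} (hts : ∀ i, t i * g i = s)
    (J : Finset ι) (c : ι → Fin K) : ∑ j ∈ J, t (c j) ∈ lengthSet g (#J * s) := by
  classical
  refine ⟨fun i => ∑ j ∈ J with c j = i, t i, ?_, sum_fiberwise' J c t⟩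
  calc ∑ i, (∑ j ∈ J with c j = i, t i) * g i
      = ∑ j ∈ J, t (c j) * g (c j) := by simp_rw [sum_mul]; exact sum_fiberwise' J c _
    _ = #J * s := by simp [hts]

theorem sum_range_div_succ_add (f : ℕ → ℕ) {m : ℕ} (hm : 0 < m) (n : ℕ) :
    ∑ j ∈ range m, f ((n + 1 + j) / m) + f (n / m) =
      ∑ j ∈ range m, f ((n + j) / m) + f (n / m + 1) := by
  have hshift : ∑ j ∈ range m, f ((n + 1 + j) / m) + f (n / m) =
      ∑ j ∈ range (m + 1), f ((n + j) / m) := by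
    rw [sum_range_succ']
    simp only [add_assoc, add_comm 1, add_zero]
  rw [hshift, sum_range_succ, Nat.add_div_right n hm]

theorem strictAntiOn_sum_range_div {f : ℕ → ℕ} {k m : ℕ} (hf : StrictAntiOn f (Set.Iic k))
    (hm : 0 < m) : StrictAntiOn (fun n => ∑ j ∈ range m, f ((n + j) / m)) (Set.Iic (m * k)) := by
  refine strictAntiOn_Iic_of_succ_lt fun n hn => ?_
  have hq : n / m < k := Nat.div_lt_of_lt_mul hn
  have hstep := sum_range_div_succ_add f hm n
  have hdrop : f (n / m + 1) < f (n / m) :=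
    hf (Set.mem_Iic.2 hq.le) (Set.mem_Iic.2 hq) (Nat.lt_succ_self _)
  simp only [Order.succ_eq_add_one]
  omega

theorem strictAntiOn_comp_clamp {k : ℕ} {t : Fin (k + 1) → ℕ} (ht : StrictAnti t) :
    StrictAntiOn (fun q => t (Fin.clamp q k)) (Set.Iic k) := by
  intro a ha b hb hab
  apply ht
  simp only [Fin.clamp, Fin.mk_lt_mk]
  simp only [Set.mem_Iic] at ha hb
  omega

theorem stmt5_general (k : ℕ) (t : Fin (k + 1) → ℕ)
    (hanti : StrictAnti t) (ht : ∀ i, 1 < t i) :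
    ∀ m : ℕ, 1 ≤ m →
      m * (k + 1) - m + 1 ≤
        (lengthSet (fun i => (∏ j, t j) / t i) (m * ∏ j, t j)).ncard := by
  intro m hm
  set s := ∏ j, t j
  set g : Fin (k + 1) → ℕ := fun i => s / t i
  have hts : ∀ i, t i * g i = s := fun i => Nat.mul_div_cancel' (dvd_prod_of_mem t (mem_univ i))
  have hs : 0 < s := prod_pos fun i _ => one_pos.trans (ht i)
  have hg : ∀ i, 0 < g i := fun i => Nat.pos_of_mul_pos_left (hts i ▸ hs)
  set φ : ℕ → ℕ := fun n => ∑ j ∈ range m, t (Fin.clamp ((n + j) / m) k)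
  have hφ : ∀ n, φ n ∈ lengthSet g (m * s) := fun n => by
    simpa using sum_mem_lengthSet_card_mul hts (range m) fun j => Fin.clamp ((n + j) / m) k
  have hinj : Set.InjOn φ (range (m * k + 1)) := fun a ha b hb =>
    (strictAntiOn_sum_range_div (strictAntiOn_comp_clamp hanti) hm).injOn
      (by simpa [Nat.lt_succ_iff] using ha) (by simpa [Nat.lt_succ_iff] using hb)
  calc m * (k + 1) - m + 1 = #((range (m * k + 1)).image φ) := by
        rw [card_image_of_injOn hinj, card_range, mul_add_one, Nat.add_sub_cancel]
    _ ≤ (lengthSet g (m * s)).ncard := by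
        rw [← Set.ncard_coe_finset]
        exact Set.ncard_le_ncard (by simpa [Set.subset_def] using fun n _ => hφ n)
          (lengthSet_finite hg _)

theorem stmt5 (k : ℕ) (hk : 1 ≤ k) (t : Fin (k + 1) → ℕ)
    (hanti : StrictAnti t) (ht : ∀ i, 1 < t i)
    (hcop : ∀ i j, i ≠ j → Nat.Coprime (t i) (t j)) :
    ∀ m : ℕ, 1 ≤ m →
      m * (k + 1) - m + 1 ≤
        (lengthSet (fun i => (∏ j, t j) / t i) (m * ∏ j, t j)).ncard :=
  stmt5_general k t hanti ht
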